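/- Let αₙ(ε) for n = 1,…,N(ε) be real numbers with |αₙ(ε)| ≤ C uniformly, N(ε) = ⌊M/ε⌋, and suppose the measures μ_ε := ε Σₙ δ_{αₙ(ε)} converge weak-* to an absolutely continuous measure G(α)dα with G ∈ L¹. Then ε Σ_{n=1}^{N(ε)} 2 arctan(ε⁻¹ αₙ(ε)) → ∫_ℝ π sgn(α) G(α) dα as ε ↓ 0. -/

import Mathlib

/-!
Compare `2 arctan(α/ε)` with the fixed test function `π · signApprox k`, continuous with compact
support and equal to `π sgn α` for `k⁻¹ ≤ |α| ≤ k`. On the atoms (all in `[-C, C] ⊆ [-k, k]`) the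
difference is at most `π - 2 arctan(1/(kε))`, which tends to `0` and is weighted by the total mass
`ε N(ε) ≤ M`, plus `2π · zeroBump k`, whose `μ_ε`-integral tends to `2π ∫ zeroBump k · G`.
Letting `k → ∞`, dominated convergence gives `∫ π signApprox k · G → ∫ π sgn · G` and
`∫ zeroBump k · G → 0`; the latter because `zeroBump k` shrinks to `{0}`, a Lebesgue-null set.
-/

open MeasureTheory Filter Real Topology

theorem tendsto_of_forall_dist_le_of_tendsto {α ι E : Type*} [PseudoMetricSpace E]
    {l : Filter α} {lk : Filter ι} [lk.NeBot] {u : α → E} {y : E}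
    (v : ι → α → E) (w : ι → α → ℝ) (yk : ι → E) (e : ι → ℝ)
    (hv : ∀ᶠ k in lk, Tendsto (v k) l (𝓝 (yk k)))
    (hw : ∀ᶠ k in lk, Tendsto (w k) l (𝓝 (e k)))
    (hyk : Tendsto yk lk (𝓝 y)) (he : Tendsto e lk (𝓝 0))
    (hdist : ∀ᶠ k in lk, ∀ᶠ x in l, dist (u x) (v k x) ≤ w k x) :
    Tendsto u l (𝓝 y) := by
  refine Metric.tendsto_nhds.2 fun η hη => ?_
  have hη3 : 0 < η / 3 := by positivity
  obtain ⟨k, hvk, hwk, hykk, hek, hdk⟩ := (hv.and <| hw.and <|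
    (Metric.tendsto_nhds.1 hyk _ hη3).and <| (he.eventually_lt_const hη3).and hdist).exists
  filter_upwards [Metric.tendsto_nhds.1 hvk _ hη3, hwk.eventually_lt_const hek, hdk]
    with x hvx hwx hdx
  calc dist (u x) y ≤ dist (u x) (v k x) + dist (v k x) (yk k) + dist (yk k) y :=
        dist_triangle4 _ _ _ _
    _ < η / 3 + η / 3 + η / 3 := by gcongr; linarith
    _ = η := by ring

theorem tendsto_integral_mul_of_dominated {α ι : Type*} [MeasurableSpace α] {μ : Measure α}
    {l : Filter ι} [l.IsCountablyGenerated] {φ : ι → α → ℝ} {φ₀ G : α → ℝ} {K : ℝ}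
    (hG : Integrable G μ) (hφ : ∀ᶠ k in l, AEStronglyMeasurable (φ k) μ)
    (hφK : ∀ᶠ k in l, ∀ x, |φ k x| ≤ K)
    (hlim : ∀ᵐ x ∂μ, Tendsto (fun k => φ k x) l (𝓝 (φ₀ x))) :
    Tendsto (fun k => ∫ x, φ k x * G x ∂μ) l (𝓝 (∫ x, φ₀ x * G x ∂μ)) := by
  refine tendsto_integral_filter_of_dominated_convergence (fun x => K * ‖G x‖)
    (hφ.mono fun k h => h.mul hG.1) (hφK.mono fun k h => ae_of_all _ fun x => ?_)
    (hG.norm.const_mul K) (hlim.mono fun x h => h.mul tendsto_const_nhds)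
  rw [norm_mul, Real.norm_eq_abs]
  exact mul_le_mul_of_nonneg_right (h x) (norm_nonneg _)

theorem abs_two_arctan_le (x : ℝ) : |2 * arctan x| ≤ π := by
  rw [abs_mul, abs_two]
  linarith [(abs_lt.2 ⟨neg_pi_div_two_lt_arctan x, arctan_lt_pi_div_two x⟩).le]

theorem pi_sub_two_arctan_nonneg (x : ℝ) : 0 ≤ π - 2 * arctan x := by
  linarith [arctan_lt_pi_div_two x]

theorem abs_two_arctan_mul_sub_pi_mul_sign_le {t δ x : ℝ} (ht : 0 ≤ t) (hδx : δ ≤ |x|) :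
    |2 * arctan (t * x) - π * sign x| ≤ π - 2 * arctan (t * δ) := by
  have hmono : arctan (t * δ) ≤ arctan (t * |x|) :=
    arctan_strictMono.monotone (mul_le_mul_of_nonneg_left hδx ht)
  have hlt := arctan_lt_pi_div_two (t * |x|)
  rcases lt_trichotomy x 0 with hx | rfl | hx
  · rw [abs_of_neg hx, mul_neg, arctan_neg] at hmono hlt
    rw [sign_of_neg hx, abs_le]
    constructor <;> linarith
  · simpa using pi_sub_two_arctan_nonneg (t * δ)
  · rw [abs_of_pos hx] at hmono hlt
    rw [sign_of_pos hx, abs_le]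
    constructor <;> linarith

theorem tendsto_pi_sub_two_arctan_inv_mul {c : ℝ} (hc : 0 < c) :
    Tendsto (fun ε => π - 2 * arctan (ε⁻¹ * c)) (𝓝[>] 0) (𝓝 0) := by
  have harctan : Tendsto (fun ε => arctan (ε⁻¹ * c)) (𝓝[>] 0) (𝓝 (π / 2)) :=
    (tendsto_arctan_atTop.mono_right nhdsWithin_le_nhds).comp
      (tendsto_inv_nhdsGT_zero.atTop_mul_const hc)
  convert (harctan.const_mul 2).const_sub π using 2
  ring

def signApprox (k x : ℝ) : ℝ := max (-1) (min 1 (k * x)) * max 0 (min 1 (k + 1 - |x|))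

def zeroBump (k x : ℝ) : ℝ := max 0 (min 1 (2 - k * |x|))

section TestFunctions

variable {k x : ℝ}

@[fun_prop]
theorem continuous_signApprox (k : ℝ) : Continuous (signApprox k) := by
  unfold signApprox; fun_prop

@[fun_prop]
theorem continuous_zeroBump (k : ℝ) : Continuous (zeroBump k) := by
  unfold zeroBump; fun_prop

theorem hasCompactSupport_signApprox (k : ℝ) : HasCompactSupport (signApprox k) := by
  refine HasCompactSupport.intro (isCompact_closedBall 0 (k + 1)) fun x hx => ?_
  rw [Metric.mem_closedBall, dist_zero_right, Real.norm_eq_abs, not_le] at hx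
  exact mul_eq_zero_of_right _ (max_eq_left (min_le_of_right_le (by linarith)))

theorem hasCompactSupport_zeroBump (hk : 0 < k) : HasCompactSupport (zeroBump k) := by
  refine HasCompactSupport.intro (isCompact_closedBall 0 (2 / k)) fun x hx => ?_
  rw [Metric.mem_closedBall, dist_zero_right, Real.norm_eq_abs, not_le, div_lt_iff₀' hk] at hx
  exact max_eq_left (min_le_of_right_le (by linarith))

theorem abs_signApprox_le_one (k x : ℝ) : |signApprox k x| ≤ 1 := by
  rw [signApprox, abs_mul]
  refine mul_le_one₀ (abs_le.2 ⟨le_max_left _ _, max_le (by norm_num) (min_le_left _ _)⟩)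
    (abs_nonneg _) (abs_le.2 ⟨by linarith [le_max_left 0 (min 1 (k + 1 - |x|))],
      max_le zero_le_one (min_le_left _ _)⟩)

theorem abs_pi_mul_signApprox_le (k x : ℝ) : |π * signApprox k x| ≤ π := by
  rw [abs_mul, abs_of_pos pi_pos]
  exact mul_le_of_le_one_right pi_pos.le (abs_signApprox_le_one k x)

theorem signApprox_eq_sign (hk : 0 < k) (hkx : k⁻¹ ≤ |x|) (hxk : |x| ≤ k) :
    signApprox k x = sign x := by
  have hcut : max 0 (min 1 (k + 1 - |x|)) = 1 := by
    rw [min_eq_left (by linarith), max_eq_right zero_le_one]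
  have hkx' : 1 ≤ k * |x| := by rwa [inv_le_iff_one_le_mul₀' hk] at hkx
  rw [signApprox, hcut, mul_one]
  rcases lt_trichotomy x 0 with hx | rfl | hx
  · rw [abs_of_neg hx] at hkx'
    rw [sign_of_neg hx, min_eq_right (by linarith), max_eq_left (by linarith)]
  · norm_num at hkx'
  · rw [abs_of_pos hx] at hkx'
    rw [sign_of_pos hx, min_eq_left hkx', max_eq_right (by linarith)]

theorem tendsto_signApprox_atTop (x : ℝ) :
    Tendsto (fun k => signApprox k x) atTop (𝓝 (sign x)) := by
  rcases eq_or_ne x 0 with rfl | hx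
  · simp [signApprox]
  refine tendsto_const_nhds.congr' ?_
  filter_upwards [eventually_ge_atTop |x|, eventually_ge_atTop |x|⁻¹,
    eventually_gt_atTop 0] with k hxk hkx hk
  exact (signApprox_eq_sign hk (inv_le_of_inv_le₀ (abs_pos.2 hx) hkx) hxk).symm

theorem zeroBump_nonneg (k x : ℝ) : 0 ≤ zeroBump k x := le_max_left _ _

theorem zeroBump_le_one (k x : ℝ) : zeroBump k x ≤ 1 := max_le zero_le_one (min_le_left _ _)

theorem zeroBump_eq_one (hkx : k * |x| ≤ 1) : zeroBump k x = 1 := by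
  rw [zeroBump, min_eq_left (by linarith), max_eq_right zero_le_one]

theorem tendsto_zeroBump_atTop (hx : x ≠ 0) :
    Tendsto (fun k => zeroBump k x) atTop (𝓝 0) := by
  refine tendsto_const_nhds.congr' ?_
  filter_upwards [eventually_ge_atTop (2 / |x|)] with k hk
  rw [div_le_iff₀ (abs_pos.2 hx)] at hk
  exact (max_eq_left (min_le_of_right_le (by linarith))).symm

end TestFunctions

theorem abs_two_arctan_mul_sub_pi_mul_signApprox_le {t k x : ℝ} (ht : 0 ≤ t) (hk : 0 < k)
    (hxk : |x| ≤ k) :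
    |2 * arctan (t * x) - π * signApprox k x| ≤
      π - 2 * arctan (t * k⁻¹) + 2 * π * zeroBump k x := by
  rcases le_or_gt (k * |x|) 1 with hkx | hkx
  · rw [zeroBump_eq_one hkx]
    linarith [abs_sub (2 * arctan (t * x)) (π * signApprox k x), abs_two_arctan_le (t * x),
      abs_pi_mul_signApprox_le k x, pi_sub_two_arctan_nonneg (t * k⁻¹)]
  · have hkx' : k⁻¹ ≤ |x| := (inv_le_iff_one_le_mul₀' hk).2 hkx.le
    have := abs_two_arctan_mul_sub_pi_mul_sign_le ht hkx'
    rw [signApprox_eq_sign hk hkx' hxk]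
    linarith [mul_nonneg (mul_nonneg zero_le_two pi_pos.le) (zeroBump_nonneg k x)]

theorem abs_mul_sum_sub_mul_sum_le {ι : Type*} (s : Finset ι) {ε r M : ℝ} (hε : 0 ≤ ε)
    (hr : 0 ≤ r) (hmass : ε * s.card ≤ M) {g f b : ι → ℝ} (h : ∀ i ∈ s, |g i - f i| ≤ r + b i) :
    |ε * ∑ i ∈ s, g i - ε * ∑ i ∈ s, f i| ≤ M * r + ε * ∑ i ∈ s, b i := by
  calc |ε * ∑ i ∈ s, g i - ε * ∑ i ∈ s, f i| = ε * |∑ i ∈ s, (g i - f i)| := by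
        rw [← mul_sub, ← Finset.sum_sub_distrib, abs_mul, abs_of_nonneg hε]
    _ ≤ ε * ∑ i ∈ s, (r + b i) := by
        gcongr
        exact (Finset.abs_sum_le_sum_abs _ _).trans (Finset.sum_le_sum h)
    _ = ε * s.card * r + ε * ∑ i ∈ s, b i := by
        rw [Finset.sum_add_distrib, Finset.sum_const, nsmul_eq_mul]; ring
    _ ≤ M * r + ε * ∑ i ∈ s, b i := by gcongr

theorem zero_dispersion_limit_of_U_general
    (M C : ℝ) (hM : 0 < M)
    (a : ℝ → ℕ → ℝ) (G : ℝ → ℝ) (hG : Integrable G)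
    (hbound : ∀ ε ∈ Set.Ioi (0:ℝ), ∀ n < Nat.floor (M / ε), |a ε n| ≤ C)
    (hweak : ∀ f : ℝ → ℝ, Continuous f → HasCompactSupport f →
      Tendsto (fun ε : ℝ => ε * ∑ n ∈ Finset.range (Nat.floor (M / ε)), f (a ε n))
        (nhdsWithin 0 (Set.Ioi 0)) (nhds (∫ α, f α * G α))) :
    Tendsto (fun ε : ℝ =>
        ε * ∑ n ∈ Finset.range (Nat.floor (M / ε)), 2 * Real.arctan (ε⁻¹ * a ε n))
      (nhdsWithin 0 (Set.Ioi 0))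
      (nhds (∫ α, Real.pi * Real.sign α * G α)) := by
  have hmass : ∀ ε > 0, ε * (Finset.range ⌊M / ε⌋₊).card ≤ M := fun ε hε => by
    rw [Finset.card_range, ← le_div_iff₀' hε]
    exact Nat.floor_le (div_nonneg hM.le hε.le)
  have hsign : Tendsto (fun k => ∫ x, π * signApprox k x * G x) atTop
      (𝓝 (∫ x, π * sign x * G x)) :=
    tendsto_integral_mul_of_dominated hG (.of_forall fun k => by fun_prop)
      (.of_forall abs_pi_mul_signApprox_le)
      (ae_of_all _ fun x => (tendsto_signApprox_atTop x).const_mul π)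
  have hbump : Tendsto (fun k => ∫ x, 2 * π * zeroBump k x * G x) atTop (𝓝 0) := by
    simpa using tendsto_integral_mul_of_dominated (φ₀ := 0) hG (.of_forall fun k => by fun_prop)
      (.of_forall fun k x => by
        rw [abs_of_nonneg (mul_nonneg two_pi_pos.le (zeroBump_nonneg k x))]
        exact mul_le_of_le_one_right two_pi_pos.le (zeroBump_le_one k x))
      ((volume.ae_ne 0).mono fun x hx => by
        simpa using (tendsto_zeroBump_atTop hx).const_mul (2 * π))
  refine tendsto_of_forall_dist_le_of_tendsto (lk := atTop)
    (fun k ε => ε * ∑ n ∈ Finset.range ⌊M / ε⌋₊, π * signApprox k (a ε n))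
    (fun k ε => M * (π - 2 * arctan (ε⁻¹ * k⁻¹))
      + ε * ∑ n ∈ Finset.range ⌊M / ε⌋₊, 2 * π * zeroBump k (a ε n))
    (fun k => ∫ x, π * signApprox k x * G x) (fun k => M * 0 + ∫ x, 2 * π * zeroBump k x * G x)
    (.of_forall fun k => hweak _ (by fun_prop) (hasCompactSupport_signApprox k).mul_left)
    ((eventually_gt_atTop 0).mono fun k hk =>
      ((tendsto_pi_sub_two_arctan_inv_mul (inv_pos.2 hk)).const_mul M).add
        (hweak _ (by fun_prop) (hasCompactSupport_zeroBump hk).mul_left))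
    hsign (by simpa only [mul_zero, zero_add] using hbump) ?_
  filter_upwards [eventually_ge_atTop C, eventually_gt_atTop 0] with k hCk hk
  filter_upwards [self_mem_nhdsWithin] with ε hε
  rw [Real.dist_eq]
  refine abs_mul_sum_sub_mul_sum_le _ hε.le (pi_sub_two_arctan_nonneg _) (hmass ε hε)
    fun n hn => ?_
  exact abs_two_arctan_mul_sub_pi_mul_signApprox_le (inv_nonneg.2 hε.le) hk
    ((hbound ε hε n (Finset.mem_range.1 hn)).trans hCk)

/-- Abstract core of the zero-dispersion limit of `Ũ = ε Σ 2 arctan(ε⁻¹αₙ)`: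
if `αₙ(ε)`, `n = 1, …, N(ε) = ⌊M/ε⌋`, are uniformly bounded by `C` and the measures
`μ_ε = ε Σₙ δ_{αₙ(ε)}` converge weak-* (tested against continuous compactly supported
functions) to the absolutely continuous measure `G(α)dα` with `G ∈ L¹`, then
`ε Σₙ 2 arctan(ε⁻¹ αₙ(ε)) → ∫ π sgn(α) G(α) dα` as `ε ↓ 0`. -/
theorem zero_dispersion_limit_of_U
    (M C : ℝ) (hM : 0 < M) (hC : 0 < C)
    (a : ℝ → ℕ → ℝ) (G : ℝ → ℝ) (hG : Integrable G)
    (hbound : ∀ ε ∈ Set.Ioi (0:ℝ), ∀ n < Nat.floor (M / ε), |a ε n| ≤ C)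
    (hweak : ∀ f : ℝ → ℝ, Continuous f → HasCompactSupport f →
      Tendsto (fun ε : ℝ => ε * ∑ n ∈ Finset.range (Nat.floor (M / ε)), f (a ε n))
        (nhdsWithin 0 (Set.Ioi 0)) (nhds (∫ α, f α * G α))) :
    Tendsto (fun ε : ℝ =>
        ε * ∑ n ∈ Finset.range (Nat.floor (M / ε)), 2 * Real.arctan (ε⁻¹ * a ε n))
      (nhdsWithin 0 (Set.Ioi 0))
      (nhds (∫ α, Real.pi * Real.sign α * G α)) :=
  zero_dispersion_limit_of_U_general M C hM a G hG hbound hweak
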